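/- arXiv:0912.2534 — 2 statements merged into one kernel-verified Lean document; each statement's English description precedes it below -/
import Mathlib

section
/- Let A ∈ ℝ≥0^{n×n} with λ(A) = 1, and let S ∈ ℝ≥0^{n×n} be the matrix whose entries equal a_{ij} on the edges of a completely reducible subgraph C of the critical graph of A and 0 elsewhere. Then there exists a positive vector z ∈ ℝ>0^n such that, with D = diag(z), the matrix D^{−1}SD is a 0–1 matrix (all entries 0 or 1). -/
/-!
Take `z i` to be the largest weight of a walk starting at `i`, i.e. the `i`-th entry of
`⊕_j A*_{·j}`. It is finite because `λ(A) = 1` bounds the weight of every closed walk by `1`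
(cut out cycles of length at most `n` one at a time), and `A i j * z j ≤ z i` because prepending
the edge `(i, j)` to a walk from `j` gives a walk from `i`. Along a critical cycle, whose weight
is `1`, these inequalities multiply to an equality, so each of them is tight: `A i j * z j = z i`
on every critical edge, which is the claim for the nonzero entries of `S`.
-/

open scoped NNReal Classical

namespace MaxAlg

/-- Max-times matrix product over `ℝ≥0`. -/
noncomputable def mmul {n : ℕ} (A B : Fin n → Fin n → ℝ≥0) : Fin n → Fin n → ℝ≥0 :=
  fun i j => Finset.univ.sup fun k => A i k * B k j

/-- Max-algebraic powers of a matrix, with `mpow A 0` the identity. -/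
noncomputable def mpow {n : ℕ} (A : Fin n → Fin n → ℝ≥0) : ℕ → (Fin n → Fin n → ℝ≥0)
  | 0 => fun i j => if i = j then 1 else 0
  | (k+1) => mmul A (mpow A k)

/-- Weight of a walk `p` of length `k` (product of the edge weights). -/
noncomputable def pathWeight {n : ℕ} (A : Fin n → Fin n → ℝ≥0) (k : ℕ)
    (p : Fin (k+1) → Fin n) : ℝ≥0 :=
  ∏ t : Fin k, A (p t.castSucc) (p t.succ)

/-- `p` is a walk in the edge relation `E`. -/
def IsEPath {n : ℕ} (E : Fin n → Fin n → Prop) (k : ℕ) (p : Fin (k+1) → Fin n) : Prop :=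
  ∀ t : Fin k, E (p t.castSucc) (p t.succ)

/-- `j` is reachable from `i` in `E` (possibly by the empty path). -/
def Reach {n : ℕ} (E : Fin n → Fin n → Prop) (i j : Fin n) : Prop :=
  ∃ k, ∃ p : Fin (k+1) → Fin n, IsEPath E k p ∧ p 0 = i ∧ p (Fin.last k) = j

/-- Edge relation of the digraph associated with a nonnegative matrix. -/
def edges {n : ℕ} (A : Fin n → Fin n → ℝ≥0) (i j : Fin n) : Prop := A i j ≠ 0

/-- Lengths of (positive-length) closed walks through `i` in `E`. -/
def cycLen {n : ℕ} (E : Fin n → Fin n → Prop) (i : Fin n) : Set ℕ :=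
  {k | 0 < k ∧ ∃ p : Fin (k+1) → Fin n, IsEPath E k p ∧ p 0 = i ∧ p (Fin.last k) = i}

/-- Lengths of all closed walks in `E`. -/
def allCycLen {n : ℕ} (E : Fin n → Fin n → Prop) : Set ℕ :=
  {k | ∃ i, k ∈ cycLen E i}

/-- The gcd of a set of naturals, characterized by the gcd property. -/
noncomputable def setGcd (S : Set ℕ) : ℕ :=
  sInf {d | (∀ s ∈ S, d ∣ s) ∧ ∀ e : ℕ, (∀ s ∈ S, e ∣ s) → e ∣ d}

/-- Cyclicity of a (completely reducible) digraph: lcm over the nodes of the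
gcd of the cycle lengths through that node. -/
noncomputable def graphCyc {n : ℕ} (E : Fin n → Fin n → Prop) : ℕ :=
  Finset.univ.lcm fun i => if (cycLen E i).Nonempty then setGcd (cycLen E i) else 1

/-- The maximum cycle geometric mean `λ(A)`. -/
noncomputable def mcgm {n : ℕ} (A : Fin n → Fin n → ℝ≥0) : ℝ≥0 :=
  sSup {x | ∃ k : ℕ, 0 < k ∧ k ≤ n ∧ ∃ p : Fin (k+1) → Fin n,
    p 0 = p (Fin.last k) ∧ x = pathWeight A k p ^ ((1 : ℝ) / (k : ℝ))}

/-- The Kleene star `A* = I ⊕ A ⊕ A² ⊕ ⋯` (entrywise supremum of all powers). -/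
noncomputable def kleeneStar {n : ℕ} (A : Fin n → Fin n → ℝ≥0) : Fin n → Fin n → ℝ≥0 :=
  fun i j => ⨆ k : ℕ, mpow A k i j

/-- `(i,j)` is a critical edge: it lies on a cycle attaining `λ(A)`. -/
def IsCriticalEdge {n : ℕ} (A : Fin n → Fin n → ℝ≥0) (i j : Fin n) : Prop :=
  ∃ k : ℕ, 0 < k ∧ k ≤ n ∧ ∃ p : Fin (k+1) → Fin n, p 0 = p (Fin.last k) ∧
    pathWeight A k p ^ ((1 : ℝ) / (k : ℝ)) = mcgm A ∧
    ∃ t : Fin k, p t.castSucc = i ∧ p t.succ = j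

/-- A node lying on a critical cycle of `A`. -/
def IsCriticalNode {n : ℕ} (A : Fin n → Fin n → ℝ≥0) (i : Fin n) : Prop :=
  (∃ j, IsCriticalEdge A i j) ∨ (∃ j, IsCriticalEdge A j i)

/-- A completely reducible subgraph of the critical graph of `A`:
every edge is critical, and every edge can be completed to a cycle of the
subgraph (so each weakly connected part is strongly connected). -/
structure CritSubgraph {n : ℕ} (A : Fin n → Fin n → ℝ≥0) where
  E : Fin n → Fin n → Prop
  critical : ∀ i j, E i j → IsCriticalEdge A i j
  reducible : ∀ i j, E i j → ∃ k, ∃ p : Fin (k+1) → Fin n,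
    IsEPath E k p ∧ p 0 = j ∧ p (Fin.last k) = i

/-- Node set `N_c` of the subgraph. -/
def CritSubgraph.Nc {n : ℕ} {A : Fin n → Fin n → ℝ≥0} (G : CritSubgraph A) (i : Fin n) : Prop :=
  (∃ j, G.E i j) ∨ (∃ j, G.E j i)

/-- The matrix `C`: columns of `(A^γ)*` with indices in `N_c`, other columns zero. -/
noncomputable def Cmat {n : ℕ} (A : Fin n → Fin n → ℝ≥0) (G : CritSubgraph A) :
    Fin n → Fin n → ℝ≥0 :=
  fun i j => if G.Nc j then kleeneStar (mpow A (graphCyc G.E)) i j else 0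

/-- The matrix `R`: rows of `(A^γ)*` with indices in `N_c`, other rows zero. -/
noncomputable def Rmat {n : ℕ} (A : Fin n → Fin n → ℝ≥0) (G : CritSubgraph A) :
    Fin n → Fin n → ℝ≥0 :=
  fun i j => if G.Nc i then kleeneStar (mpow A (graphCyc G.E)) i j else 0

/-- The matrix `S`: the restriction of `A` to the edges of the subgraph. -/
noncomputable def Smat {n : ℕ} (A : Fin n → Fin n → ℝ≥0) (G : CritSubgraph A) :
    Fin n → Fin n → ℝ≥0 :=
  fun i j => if G.E i j then A i j else 0

/-- The CSR product `P^(t) = C ⊗ S^t ⊗ R`. -/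
noncomputable def csr {n : ℕ} (A : Fin n → Fin n → ℝ≥0) (G : CritSubgraph A) (t : ℕ) :
    Fin n → Fin n → ℝ≥0 :=
  mmul (mmul (Cmat A G) (mpow (Smat A G) t)) (Rmat A G)

/-- The strongly connected component (as a node set) of `i` in `E`. -/
def scc {n : ℕ} (E : Fin n → Fin n → Prop) (i : Fin n) : Set (Fin n) :=
  {j | Reach E i j ∧ Reach E j i}

/-- The principal submatrix of `A` on the strongly connected component of `i`
in `D(A)` (other entries zero). -/
noncomputable def compMat {n : ℕ} (A : Fin n → Fin n → ℝ≥0) (i : Fin n) :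
    Fin n → Fin n → ℝ≥0 :=
  fun a b => if a ∈ scc (edges A) i ∧ b ∈ scc (edges A) i then A a b else 0

/-- `λ(i)`: the m.c.g.m. of the component of `D(A)` containing `i`. -/
noncomputable def lamNode {n : ℕ} (A : Fin n → Fin n → ℝ≥0) (i : Fin n) : ℝ≥0 :=
  mcgm (compMat A i)

/-- `i` belongs to a nontrivial component of `D(A)` (it lies on a cycle). -/
def Nontrivial' {n : ℕ} (A : Fin n → Fin n → ℝ≥0) (i : Fin n) : Prop :=
  (cycLen (edges A) i).Nonempty

/-- `γ`: the lcm of the cyclicities of the critical graphs of the nontrivial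
components of `D(A)`. -/
noncomputable def gammaU {n : ℕ} (A : Fin n → Fin n → ℝ≥0) : ℕ :=
  Finset.univ.lcm fun i =>
    if Nontrivial' A i then graphCyc (IsCriticalEdge (compMat A i)) else 1

/-- Max-times matrix-vector product. -/
noncomputable def mvec {n : ℕ} (M : Fin n → Fin n → ℝ≥0) (y : Fin n → ℝ≥0) :
    Fin n → ℝ≥0 :=
  fun a => Finset.univ.sup fun k => M a k * y k

/-- `i` strongly accesses `j`: paths of every sufficiently large length exist. -/
def StrongAccess {n : ℕ} (E : Fin n → Fin n → Prop) (i j : Fin n) : Prop :=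
  ∃ T, ∀ t ≥ T, ∃ p : Fin (t+1) → Fin n, IsEPath E t p ∧ p 0 = i ∧ p (Fin.last t) = j

section WalkWeight

variable {α : Type*} (A : α → α → ℝ≥0)

noncomputable def walkWeight : List α → ℝ≥0
  | [] => 1
  | [_] => 1
  | a :: b :: l => A a b * walkWeight (b :: l)

theorem walkWeight_append_cons : ∀ (l : List α) (x : α) (m : List α),
    walkWeight A (l ++ x :: m) = walkWeight A (l ++ [x]) * walkWeight A (x :: m)
  | [], x, m => by simp [walkWeight]
  | [y], x, m => by simp [walkWeight]
  | y :: z :: l, x, m => by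
    simp only [List.cons_append, walkWeight]
    rw [mul_assoc, ← List.cons_append, ← List.cons_append, walkWeight_append_cons (z :: l) x m]

theorem walkWeight_append_cons_append_cons (a b c : List α) (x : α) :
    walkWeight A (a ++ x :: (b ++ x :: c))
      = walkWeight A (x :: (b ++ [x])) * walkWeight A (a ++ x :: c) := by
  rw [walkWeight_append_cons A a, ← List.cons_append, walkWeight_append_cons A (x :: b),
    walkWeight_append_cons A a x c, List.cons_append]
  ring

theorem exists_eq_append_cons_append_cons_of_card_lt [Fintype α] {l : List α}
    (h : Fintype.card α < l.length) : ∃ a x b c, l = a ++ x :: (b ++ x :: c) := by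
  have hdup : ¬ l.Nodup := fun hl => hl.length_le_card.not_gt h
  simp only [List.nodup_iff_sublist, not_forall, not_not] at hdup
  obtain ⟨x, hx⟩ := hdup
  obtain ⟨r₁, r₂, rfl, hx₁, hx₂⟩ := List.cons_sublist_iff.mp hx
  rw [List.singleton_sublist] at hx₂
  obtain ⟨a, b₁, rfl⟩ := List.append_of_mem hx₁
  obtain ⟨b₂, c, rfl⟩ := List.append_of_mem hx₂
  exact ⟨a, x, b₁ ++ b₂, c, by simp⟩

theorem exists_walkWeight_eq_closed_mul_shorter [Fintype α] {l : List α}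
    (h : Fintype.card α + 1 < l.length) :
    ∃ c l' : List α, c.head? = c.getLast? ∧ c.length < l.length ∧ l'.length < l.length ∧
      l'.head? = l.head? ∧ l'.getLast? = l.getLast? ∧
      walkWeight A l = walkWeight A c * walkWeight A l' := by
  obtain rfl | ⟨m, y, rfl⟩ := l.eq_nil_or_concat
  · simp at h
  rw [List.concat_eq_append] at h ⊢
  obtain ⟨a, x, b, c, rfl⟩ :=
    exists_eq_append_cons_append_cons_of_card_lt (l := m) (by simp at h; omega)
  refine ⟨x :: (b ++ [x]), a ++ x :: (c ++ [y]), by simp [List.getLast?_cons], by simp; omega,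
    by simp, by cases a <;> simp, ?_, ?_⟩
  · simp only [← List.cons_append, ← List.append_assoc, List.getLast?_concat]
  · rw [← walkWeight_append_cons_append_cons]; simp

variable [Fintype α]

theorem walkWeight_le_one_of_short_le_one
    (hshort : ∀ l : List α, l.length ≤ Fintype.card α + 1 → l.head? = l.getLast? →
      walkWeight A l ≤ 1)
    (l : List α) (hl : l.head? = l.getLast?) : walkWeight A l ≤ 1 := by
  induction hlen : l.length using Nat.strong_induction_on generalizing l with
  | _ N ih =>
  by_cases hN : N ≤ Fintype.card α + 1
  · exact hshort l (hlen ▸ hN) hl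
  obtain ⟨c, l', hc, hcl, hl'l, hh, hg, hw⟩ :=
    exists_walkWeight_eq_closed_mul_shorter A (l := l) (by omega)
  rw [hw]
  exact mul_le_one' (ih _ (hlen ▸ hcl) c hc rfl)
    (ih _ (hlen ▸ hl'l) l' (hh.trans (hl.trans hg.symm)) rfl)

theorem exists_short_walkWeight_ge
    (hcyc : ∀ l : List α, l.head? = l.getLast? → walkWeight A l ≤ 1) (l : List α) :
    ∃ l' : List α, l'.length ≤ Fintype.card α + 1 ∧ l'.head? = l.head? ∧
      walkWeight A l ≤ walkWeight A l' := by
  induction hlen : l.length using Nat.strong_induction_on generalizing l with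
  | _ N ih =>
  by_cases hN : N ≤ Fintype.card α + 1
  · exact ⟨l, hlen ▸ hN, rfl, le_rfl⟩
  obtain ⟨c, l', hc, -, hl'l, hh, -, hw⟩ :=
    exists_walkWeight_eq_closed_mul_shorter A (l := l) (by omega)
  obtain ⟨l'', hlen'', hh'', hle''⟩ := ih _ (hlen ▸ hl'l) l' rfl
  refine ⟨l'', hlen'', hh''.trans hh, ?_⟩
  calc walkWeight A l = walkWeight A c * walkWeight A l' := hw
    _ ≤ 1 * walkWeight A l'' := mul_le_mul' (hcyc c hc) hle''
    _ = walkWeight A l'' := one_mul _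

def shortWalksFrom (i : α) : Set (List α) :=
  {l | l.head? = some i ∧ l.length ≤ Fintype.card α + 1}

theorem singleton_mem_shortWalksFrom (i : α) : [i] ∈ shortWalksFrom i :=
  ⟨rfl, by simp⟩

-- The length bound keeps the set finite; by `exists_short_walkWeight_ge` it loses nothing.
noncomputable def maxWalkWeight (i : α) : ℝ≥0 :=
  sSup (walkWeight A '' shortWalksFrom i)

theorem finite_walkWeight_image (i : α) : (walkWeight A '' shortWalksFrom i).Finite :=
  ((List.finite_length_le α _).subset fun _ hl => hl.2).image _

theorem one_le_maxWalkWeight (i : α) : 1 ≤ maxWalkWeight A i :=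
  le_csSup (finite_walkWeight_image A i).bddAbove ⟨[i], singleton_mem_shortWalksFrom i, rfl⟩

theorem walkWeight_le_maxWalkWeight
    (hcyc : ∀ l : List α, l.head? = l.getLast? → walkWeight A l ≤ 1) {i : α} {l : List α}
    (hl : l.head? = some i) : walkWeight A l ≤ maxWalkWeight A i := by
  obtain ⟨l', hlen, hh, hle⟩ := exists_short_walkWeight_ge A hcyc l
  exact hle.trans <|
    le_csSup (finite_walkWeight_image A i).bddAbove ⟨l', ⟨hh.trans hl, hlen⟩, rfl⟩

theorem mul_maxWalkWeight_le
    (hcyc : ∀ l : List α, l.head? = l.getLast? → walkWeight A l ≤ 1) (i j : α) :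
    A i j * maxWalkWeight A j ≤ maxWalkWeight A i := by
  obtain ⟨l, ⟨hl, -⟩, hw⟩ :=
    (Set.Nonempty.image (walkWeight A) ⟨[j], singleton_mem_shortWalksFrom j⟩).csSup_mem
      (finite_walkWeight_image A j)
  obtain ⟨m, rfl⟩ := List.head?_eq_some_iff.mp hl
  rw [maxWalkWeight, ← hw]
  exact walkWeight_le_maxWalkWeight A hcyc (l := i :: j :: m) rfl

end WalkWeight

section CycleMean

variable {n : ℕ} (A : Fin n → Fin n → ℝ≥0)

theorem walkWeight_ofFn : ∀ (k : ℕ) (p : Fin (k + 1) → Fin n),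
    walkWeight A (List.ofFn p) = pathWeight A k p
  | 0, p => by simp [walkWeight, pathWeight]
  | k + 1, p => by
    have ih := walkWeight_ofFn k (fun i => p i.succ)
    rw [List.ofFn_succ] at ih
    rw [List.ofFn_succ, List.ofFn_succ, walkWeight, ih, pathWeight, pathWeight,
      Fin.prod_univ_succ]
    rfl

variable {A}

theorem pathWeight_le_one_of_mcgm_eq_one (h1 : mcgm A = 1) {k : ℕ} (hk : 0 < k) (hkn : k ≤ n)
    {p : Fin (k + 1) → Fin n} (hp : p 0 = p (Fin.last k)) : pathWeight A k p ≤ 1 := by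
  unfold mcgm at h1
  have hbdd : BddAbove {x | ∃ k : ℕ, 0 < k ∧ k ≤ n ∧ ∃ p : Fin (k+1) → Fin n,
      p 0 = p (Fin.last k) ∧ x = pathWeight A k p ^ ((1 : ℝ) / (k : ℝ))} := by
    by_contra hunb
    exact one_ne_zero (h1.symm.trans (NNReal.sSup_of_not_bddAbove hunb))
  have hle := le_csSup hbdd ⟨k, hk, hkn, p, hp, rfl⟩
  rwa [h1, ← NNReal.one_rpow (1 / k : ℝ), NNReal.rpow_le_rpow_iff (by positivity)] at hle

theorem walkWeight_le_one_of_mcgm_eq_one (h1 : mcgm A = 1) (l : List (Fin n))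
    (hl : l.head? = l.getLast?) : walkWeight A l ≤ 1 := by
  refine walkWeight_le_one_of_short_le_one A (fun l hlen hl => ?_) l hl
  rcases l with _ | ⟨x, t⟩
  · exact le_rfl
  rcases t with _ | ⟨y, t⟩
  · exact le_rfl
  rw [← List.ofFn_getElem (xs := x :: y :: t), walkWeight_ofFn A (t.length + 1)]
  refine pathWeight_le_one_of_mcgm_eq_one h1 t.length.succ_pos (by simpa using hlen) ?_
  simpa [List.getLast?_eq_getElem?] using hl

theorem pathWeight_eq_one_of_rpow_eq_mcgm (h1 : mcgm A = 1) {k : ℕ} (hk : 0 < k)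
    {p : Fin (k + 1) → Fin n} (hw : pathWeight A k p ^ ((1 : ℝ) / (k : ℝ)) = mcgm A) :
    pathWeight A k p = 1 :=
  NNReal.rpow_left_injective (one_div_ne_zero (Nat.cast_ne_zero.mpr hk.ne'))
    (by simpa [h1] using hw)

end CycleMean

section Subeigenvector

variable {n : ℕ} {A : Fin n → Fin n → ℝ≥0} {z : Fin n → ℝ≥0}

theorem mul_eq_of_pathWeight_eq_one (hz : ∀ i, 0 < z i) (hsub : ∀ i j, A i j * z j ≤ z i)
    {k : ℕ} {p : Fin (k + 1) → Fin n} (hp : p 0 = p (Fin.last k)) (hw : pathWeight A k p = 1)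
    (t : Fin k) : A (p t.castSucc) (p t.succ) * z (p t.succ) = z (p t.castSucc) := by
  have hw' : ∏ s : Fin k, A (p s.castSucc) (p s.succ) = 1 := hw
  have hrot : ∏ s : Fin k, z (p s.succ) = ∏ s : Fin k, z (p s.castSucc) := by
    have h := (Fin.prod_univ_succ fun s => z (p s)).symm.trans
      (Fin.prod_univ_castSucc fun s => z (p s))
    rw [hp, mul_comm] at h
    exact mul_right_cancel₀ (hz _).ne' h
  have hpos (s : Fin k) : 0 < A (p s.castSucc) (p s.succ) * z (p s.succ) :=
    mul_pos (pos_iff_ne_zero.mpr (Finset.prod_ne_zero_iff.mp (hw' ▸ one_ne_zero) s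
      (Finset.mem_univ s))) (hz _)
  -- `∏ A z_succ = pathWeight * ∏ z_succ = ∏ z_castSucc`, so no factor can be strict.
  refine (hsub _ _).eq_of_not_lt fun hlt => ?_
  have h := Finset.prod_lt_prod (fun s _ => hpos s) (fun s _ => hsub _ _)
    ⟨t, Finset.mem_univ t, hlt⟩
  rw [Finset.prod_mul_distrib, hw', one_mul, hrot] at h
  exact lt_irrefl _ h

theorem IsCriticalEdge.mul_eq (h1 : mcgm A = 1) (hz : ∀ i, 0 < z i)
    (hsub : ∀ i j, A i j * z j ≤ z i) {i j : Fin n} (h : IsCriticalEdge A i j) :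
    A i j * z j = z i := by
  obtain ⟨k, hk, -, p, hp, hw, t, rfl, rfl⟩ := h
  exact mul_eq_of_pathWeight_eq_one hz hsub hp (pathWeight_eq_one_of_rpow_eq_mcgm h1 hk hw) t

end Subeigenvector

/-- for `A` with `λ(A) = 1` and `S` the restriction of `A` to a
completely reducible subgraph of the critical graph, there is a positive `z`
such that `D⁻¹ S D` (with `D = diag z`) is a `0-1` matrix. -/
theorem exists_visualising_scaling {n : ℕ} (A : Fin n → Fin n → ℝ≥0)
    (h1 : mcgm A = 1) (G : CritSubgraph A) :
    ∃ z : Fin n → ℝ≥0, (∀ i, 0 < z i) ∧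
      ∀ i j, (z i)⁻¹ * Smat A G i j * z j = 0 ∨ (z i)⁻¹ * Smat A G i j * z j = 1 := by
  have hz (i : Fin n) : 0 < maxWalkWeight A i := one_pos.trans_le (one_le_maxWalkWeight A i)
  have hsub := mul_maxWalkWeight_le A (walkWeight_le_one_of_mcgm_eq_one h1)
  refine ⟨maxWalkWeight A, hz, fun i j => ?_⟩
  by_cases hE : G.E i j
  · right
    rw [Smat, if_pos hE, mul_assoc, (G.critical i j hE).mul_eq h1 hz hsub,
      inv_mul_cancel₀ (hz i).ne']
  · left
    simp [Smat, hE]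

end MaxAlg
end

section
/- Let S be the Boolean (0–1) incidence matrix of a strongly connected digraph G on n nodes with cyclicity γ, and let [i] →_t [j] denote that some (equivalently, every) path from a node of the cyclic class [i] to a node of the cyclic class [j] has length congruent to t mod γ. Then for all sufficiently large t (in particular for t ≥ (n−1)² + 1), the (i,j) entry of the Boolean power S^t equals 1 if [i] →_t [j] and 0 otherwise. -/
open scoped NNReal Classical

namespace MaxAlg

/-- Nodes in the same cyclic class: connected by a path of length divisible
by the cyclicity `γ`. -/
def SameClass {n : ℕ} (E : Fin n → Fin n → Prop) (γ : ℕ) (i j : Fin n) : Prop :=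
  ∃ k, ∃ p : Fin (k+1) → Fin n, IsEPath E k p ∧ p 0 = i ∧ p (Fin.last k) = j ∧ γ ∣ k

/-- `[i] →_t [j]`: some path from a node of the class of `i` to a node of the
class of `j` has length congruent to `t` modulo `γ`. -/
def ClassAccess {n : ℕ} (E : Fin n → Fin n → Prop) (γ t : ℕ) (i j : Fin n) : Prop :=
  ∃ i' j' : Fin n, SameClass E γ i i' ∧ SameClass E γ j j' ∧
    ∃ k, ∃ p : Fin (k+1) → Fin n, IsEPath E k p ∧ p 0 = i' ∧ p (Fin.last k) = j' ∧
      k ≡ t [MOD γ]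

/-!
Let `s` be the length of a shortest cycle and `γ` the cyclicity. A shortest walk from `i` to the
set of vertices lying on a closed walk of length `s` has distinct vertices outside that set, which
has at least `s` elements; so it takes at most `n - s` steps, and running around cycles we reach,
in any number `ℓ ≥ n - s` of steps, a vertex `u` on a closed walk of length `s`. From `u`, a walk
to `j` whose length `d * s` is minimal among the multiples of `s` visits `d + 1` distinct vertices
of the cyclic class of `u`, which has at most `n - γ + 1` elements since the other `γ - 1` classes
are nonempty; so `d ≤ n - γ` and loops at `u` pad it to length `(n - γ) * s`. Such a multiple
exists because the closed walk lengths at `u` form a numerical semigroup with gcd `γ`. Hence every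
`t ≥ s * (n - γ) + (n - s)` in the right residue class is a walk length, and this bound is at most
`(n - 1)² + 1`: for `s < n` by arithmetic, and for `s = n` because then `γ = n`.
-/

inductive HasWalk {V : Type*} (E : V → V → Prop) : ℕ → V → V → Prop
  | nil (i : V) : HasWalk E 0 i i
  | cons {k : ℕ} {i m j : V} : E i m → HasWalk E k m j → HasWalk E (k + 1) i j

section Walks

variable {V : Type*} {E : V → V → Prop} {k s : ℕ} {i j u : V}

namespace HasWalk

theorem single (e : E i j) : HasWalk E 1 i j := cons e (nil j)

theorem append {a b : ℕ} {l : V} (h₁ : HasWalk E a i j) (h₂ : HasWalk E b j l) :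
    HasWalk E (a + b) i l := by
  induction h₁ with
  | nil => simpa using h₂
  | cons e _ ih => rw [Nat.add_right_comm]; exact cons e (ih h₂)

theorem loop_mul (h : HasWalk E s u u) (k : ℕ) : HasWalk E (k * s) u u := by
  induction k with
  | zero => simpa using nil u
  | succ k ih => rw [Nat.succ_mul]; exact ih.append h

theorem exists_walk_to_loop (h : HasWalk E s u u) (hs : 0 < s) (q : ℕ) :
    ∃ w, HasWalk E q u w ∧ HasWalk E s w w := by
  induction q with
  | zero => exact ⟨u, nil u, h⟩
  | succ q ih =>
    obtain ⟨w, huw, hw⟩ := ih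
    obtain ⟨s, rfl⟩ : ∃ s', s = s' + 1 := ⟨s - 1, by omega⟩
    cases hw with
    | cons e hrest => exact ⟨_, huw.append (single e), hrest.append (single e)⟩

end HasWalk

theorem hasWalk_zero_iff : HasWalk E 0 i j ↔ i = j :=
  ⟨fun h => by cases h; rfl, fun h => h ▸ .nil i⟩

theorem hasWalk_succ_iff : HasWalk E (k + 1) i j ↔ ∃ m, E i m ∧ HasWalk E k m j :=
  ⟨fun h => by cases h with | cons e w => exact ⟨_, e, w⟩, fun ⟨_, e, w⟩ => .cons e w⟩

def IsWalkSeq (E : V → V → Prop) (k : ℕ) (p : ℕ → V) : Prop :=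
  ∀ m < k, E (p m) (p (m + 1))

namespace IsWalkSeq

variable {p : ℕ → V} {a b : ℕ}

theorem hasWalk (hp : IsWalkSeq E k p) (hab : a ≤ b) (hbk : b ≤ k) :
    HasWalk E (b - a) (p a) (p b) := by
  obtain ⟨d, rfl⟩ := Nat.exists_eq_add_of_le hab
  rw [Nat.add_sub_cancel_left]
  induction d generalizing a with
  | zero => exact .nil _
  | succ d ih =>
    have hrest := ih (a := a + 1) (by omega) (by omega)
    rw [Nat.add_right_comm] at hrest
    exact .cons (hp a (by omega)) hrest

theorem hasWalk_shortcut (hp : IsWalkSeq E k p) (hab : a ≤ b) (hbk : b ≤ k) (heq : p a = p b) :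
    HasWalk E (k - (b - a)) (p 0) (p k) := by
  have h₁ := hp.hasWalk (Nat.zero_le a) (hab.trans hbk)
  rw [heq] at h₁
  have h := h₁.append (hp.hasWalk hbk le_rfl)
  rwa [show a - 0 + (k - b) = k - (b - a) by omega] at h

end IsWalkSeq

theorem HasWalk.exists_isWalkSeq (h : HasWalk E k i j) :
    ∃ p, IsWalkSeq E k p ∧ p 0 = i ∧ p k = j := by
  induction h with
  | nil i => exact ⟨fun _ => i, fun m hm => absurd hm (Nat.not_lt_zero m), rfl, rfl⟩
  | @cons k i m j e _ ih =>
    obtain ⟨p, hp, hp0, hpk⟩ := ih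
    refine ⟨fun | 0 => i | m + 1 => p m, ?_, rfl, hpk⟩
    rintro (_ | m) hm
    · simpa [hp0] using e
    · exact hp m (by omega)

theorem forall_eq_of_forall_lt_ne {α : Type*} {f : ℕ → α} {n : ℕ}
    (h : ∀ a b, a < b → b < n → f a ≠ f b) : ∀ a < n, ∀ b < n, f a = f b → a = b := by
  intro a ha b hb hab
  by_contra hne
  rcases lt_or_gt_of_ne hne with hlt | hlt
  · exact h a b hlt hb hab
  · exact h b a hlt ha hab.symm

variable [Fintype V]

theorem HasWalk.exists_cycle_of_card_lt (h : HasWalk E k i j) (hk : Fintype.card V < k) :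
    ∃ m, 0 < m ∧ m ≤ Fintype.card V ∧ (∃ y, HasWalk E m y y) ∧ HasWalk E (k - m) i j := by
  obtain ⟨p, hp, rfl, rfl⟩ := h.exists_isWalkSeq
  obtain ⟨a, ha, b, hb, hne, heq⟩ :=
    Finset.exists_ne_map_eq_of_card_lt_of_maps_to (s := Finset.range (Fintype.card V + 1))
      (t := Finset.univ) (f := p) (by simp) (by simp [Set.MapsTo])
  rw [Finset.mem_range] at ha hb
  wlog hab : a < b generalizing a b
  · exact this b hb a ha hne.symm heq.symm (by omega)
  have hcycle := hp.hasWalk hab.le (by omega)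
  rw [← heq] at hcycle
  exact ⟨b - a, by omega, by omega, ⟨p a, hcycle⟩, hp.hasWalk_shortcut hab.le (by omega) heq⟩

end Walks

section Cyclicity

variable {V : Type*} {E : V → V → Prop} {k s d : ℕ} {i j u x : V}

noncomputable def cyclicity (E : V → V → Prop) : ℕ :=
  Nat.setGcd {k | ∃ x, HasWalk E k x x}

theorem cyclicity_dvd (h : HasWalk E k x x) : cyclicity E ∣ k :=
  Nat.setGcd_dvd_of_mem ⟨x, h⟩

theorem dvd_cyclicity (h : ∀ k x, HasWalk E k x x → d ∣ k) : d ∣ cyclicity E :=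
  Nat.dvd_setGcd_iff.2 fun k ⟨x, hx⟩ => h k x hx

theorem HasWalk.modEq_cyclicity (hE : ∀ a b, ∃ k, HasWalk E k a b) {a b : ℕ}
    (ha : HasWalk E a x u) (hb : HasWalk E b x u) : a ≡ b [MOD cyclicity E] := by
  obtain ⟨c, hc⟩ := hE u x
  exact Nat.ModEq.add_right_cancel' c <|
    (Nat.modEq_zero_iff_dvd.2 (cyclicity_dvd (ha.append hc))).trans
      (Nat.modEq_zero_iff_dvd.2 (cyclicity_dvd (hb.append hc))).symm

def closedWalkLengths (E : V → V → Prop) (u : V) : AddSubmonoid ℕ where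
  carrier := {k | HasWalk E k u u}
  add_mem' := HasWalk.append
  zero_mem' := .nil u

theorem setGcd_closedWalkLengths (hE : ∀ a b, ∃ k, HasWalk E k a b) (u : V) :
    Nat.setGcd (closedWalkLengths E u) = cyclicity E := by
  refine Nat.dvd_antisymm (dvd_cyclicity fun k x hx => ?_)
    (Nat.dvd_setGcd_iff.2 fun k hk => cyclicity_dvd hk)
  obtain ⟨a, hux⟩ := hE u x
  obtain ⟨b, hxu⟩ := hE x u
  have hab : Nat.setGcd (closedWalkLengths E u) ∣ a + b :=
    Nat.setGcd_dvd_of_mem (hux.append hxu)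
  have hakb : Nat.setGcd (closedWalkLengths E u) ∣ a + k + b :=
    Nat.setGcd_dvd_of_mem ((hux.append hx).append hxu)
  rw [Nat.add_right_comm] at hakb
  exact (Nat.dvd_add_right hab).1 hakb

theorem exists_hasWalk_self_of_dvd (hE : ∀ a b, ∃ k, HasWalk E k a b) (u : V) :
    ∃ N, ∀ c ≥ N, cyclicity E ∣ c → HasWalk E c u u := by
  obtain ⟨N, hN⟩ := Nat.exists_mem_closure_of_ge (closedWalkLengths E u : Set ℕ)
  refine ⟨N, fun c hc hdvd => ?_⟩
  have hmem := hN c hc (by rwa [setGcd_closedWalkLengths hE])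
  rwa [AddSubmonoid.closure_eq] at hmem

variable [Fintype V]

theorem cyclicity_eq_card_of_isLeast
    (hs : IsLeast {k | 0 < k ∧ ∃ x, HasWalk E k x x} (Fintype.card V)) :
    cyclicity E = Fintype.card V := by
  have hdvd : ∀ k x, HasWalk E k x x → Fintype.card V ∣ k := by
    intro k
    induction k using Nat.strong_induction_on with
    | _ k ih =>
      intro x hx
      rcases Nat.eq_zero_or_pos k with rfl | hk
      · exact dvd_zero _
      rcases le_or_gt k (Fintype.card V) with hle | hlt
      · rw [le_antisymm hle (hs.2 ⟨hk, x, hx⟩)]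
      · obtain ⟨m, hm, hmn, ⟨y, hy⟩, hrest⟩ := hx.exists_cycle_of_card_lt hlt
        rw [← Nat.sub_add_cancel (hmn.trans hlt.le)]
        exact dvd_add (ih _ (by omega) x hrest) (ih m (by omega) y hy)
  obtain ⟨v, hv⟩ := hs.1.2
  exact Nat.dvd_antisymm (cyclicity_dvd hv) (dvd_cyclicity hdvd)

/-- Rotating a shortest cycle puts each of its `s` vertices on a closed walk of length `s`;
they are distinct, since a repetition would cut out a shorter cycle. -/
theorem le_card_loops (hs : IsLeast {k | 0 < k ∧ ∃ x, HasWalk E k x x} s) :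
    s ≤ (Finset.univ.filter fun y => HasWalk E s y y).card := by
  obtain ⟨⟨hs0, v, hv⟩, hmin⟩ := hs
  obtain ⟨p, hp, hp0, hps⟩ := hv.exists_isWalkSeq
  refine Finset.le_card_of_inj_on_range p (fun a ha => ?_) (forall_eq_of_forall_lt_ne ?_)
  · have hback := hp.hasWalk ha.le le_rfl
    rw [hps, ← hp0] at hback
    have hrot := hback.append (hp.hasWalk (Nat.zero_le a) ha.le)
    rw [show s - a + (a - 0) = s by omega] at hrot
    simpa using hrot
  · intro a b hab hbs heq
    have hshort := hp.hasWalk_shortcut hab.le hbs.le heq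
    rw [hps, ← hp0] at hshort
    have := hmin ⟨by omega, p 0, hshort⟩
    omega

theorem exists_hasWalk_to_loops (hE : ∀ a b, ∃ k, HasWalk E k a b)
    (hs : IsLeast {k | 0 < k ∧ ∃ x, HasWalk E k x x} s) (i : V) :
    ∃ e x, e + s ≤ Fintype.card V ∧ HasWalk E e i x ∧ HasWalk E s x x := by
  set T := Finset.univ.filter fun y => HasWalk E s y y
  have hex : ∃ e x, HasWalk E e i x ∧ x ∈ T := by
    obtain ⟨v, hv⟩ := hs.1.2
    obtain ⟨e, he⟩ := hE i v
    exact ⟨e, v, he, by simpa [T] using hv⟩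
  obtain ⟨x, hix, hxT⟩ := Nat.find_spec hex
  obtain ⟨p, hp, hp0, hpe⟩ := hix.exists_isWalkSeq
  have hoff : Nat.find hex ≤ Tᶜ.card := by
    refine Finset.le_card_of_inj_on_range p (fun a ha => Finset.mem_compl.2 fun hpa => ?_)
      (forall_eq_of_forall_lt_ne ?_)
    · have := Nat.find_min' hex ⟨p a, hp0 ▸ hp.hasWalk (Nat.zero_le a) ha.le, hpa⟩
      omega
    · intro a b hab hb heq
      have hshort := hp.hasWalk_shortcut hab.le hb.le heq
      rw [hp0, hpe] at hshort
      have := Nat.find_min' hex ⟨x, hshort, hxT⟩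
      omega
  rw [Finset.card_compl] at hoff
  have hsT : s ≤ T.card := le_card_loops hs
  have hTV := Finset.card_le_univ T
  exact ⟨_, x, by omega, hix, by simpa [T] using hxT⟩

theorem exists_hasWalk_to_loop (hE : ∀ a b, ∃ k, HasWalk E k a b)
    (hs : IsLeast {k | 0 < k ∧ ∃ x, HasWalk E k x x} s) (i : V) {ℓ : ℕ}
    (hℓ : Fintype.card V - s ≤ ℓ) : ∃ u, HasWalk E ℓ i u ∧ HasWalk E s u u := by
  obtain ⟨e, x, he, hix, hx⟩ := exists_hasWalk_to_loops hE hs i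
  obtain ⟨u, hxu, hu⟩ := hx.exists_walk_to_loop hs.1.1 (ℓ - e)
  have hiu := hix.append hxu
  rw [show e + (ℓ - e) = ℓ by omega] at hiu
  exact ⟨u, hiu, hu⟩

noncomputable def cyclicClass (E : V → V → Prop) (u : V) : Finset V :=
  Finset.univ.filter fun y => ∃ k, cyclicity E ∣ k ∧ HasWalk E k u y

/-- The other `cyclicity E - 1` classes are nonempty: walks of lengths `1, …, γ - 1` out of `u`
end in them. -/
theorem card_cyclicClass_add_le (hE : ∀ a b, ∃ k, HasWalk E k a b) (hγ : 0 < cyclicity E)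
    (hu : ∀ q, ∃ w, HasWalk E q u w) :
    (cyclicClass E u).card + (cyclicity E - 1) ≤ Fintype.card V := by
  choose w hw using hu
  have hcompl : cyclicity E - 1 ≤ (cyclicClass E u)ᶜ.card := by
    refine Finset.le_card_of_inj_on_range (fun q => w (q + 1))
      (fun q hq => Finset.mem_compl.2 fun hmem => ?_) (fun a ha b hb hab => ?_)
    · obtain ⟨k, hk, huk⟩ := (Finset.mem_filter.1 hmem).2
      have hmod := ((hw (q + 1)).modEq_cyclicity hE huk).trans (Nat.modEq_zero_iff_dvd.2 hk)
      have := hmod.eq_of_lt_of_lt (by omega) hγ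
      omega
    · have hmod := (hw (a + 1)).modEq_cyclicity hE (hab ▸ hw (b + 1))
      have := hmod.eq_of_lt_of_lt (by omega) (by omega)
      omega
  have := Finset.card_add_card_compl (cyclicClass E u)
  omega

/-- The vertices at distances `0, s, 2s, …, ds` along a walk from `u` to `j` of minimal length
among the multiples of `s` are distinct. -/
theorem lt_card_cyclicClass_of_minimal (hsγ : cyclicity E ∣ s) (hd : HasWalk E (d * s) u j)
    (hmin : ∀ d' < d, ¬ HasWalk E (d' * s) u j) : d < (cyclicClass E u).card := by
  obtain ⟨p, hp, hp0, hpd⟩ := hd.exists_isWalkSeq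
  refine Finset.le_card_of_inj_on_range (fun a => p (a * s)) (fun a ha => ?_)
    (forall_eq_of_forall_lt_ne fun a b hab hb heq => ?_)
  · have hwalk := hp.hasWalk (Nat.zero_le (a * s)) (Nat.mul_le_mul_right s (by omega))
    rw [hp0, Nat.sub_zero] at hwalk
    exact Finset.mem_filter.2 ⟨Finset.mem_univ _, a * s, dvd_mul_of_dvd_right hsγ a, hwalk⟩
  · have hshort := hp.hasWalk_shortcut (Nat.mul_le_mul_right s hab.le)
      (Nat.mul_le_mul_right s (by omega)) heq
    rw [hp0, hpd, ← Nat.sub_mul, ← Nat.sub_mul] at hshort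
    exact hmin _ (by omega) hshort

theorem hasWalk_card_sub_cyclicity_mul (hE : ∀ a b, ∃ k, HasWalk E k a b)
    (hu : HasWalk E s u u) (hs : 0 < s) (hsγ : cyclicity E ∣ s) {m : ℕ}
    (huj : HasWalk E m u j) (hmγ : cyclicity E ∣ m) :
    HasWalk E ((Fintype.card V - cyclicity E) * s) u j := by
  obtain ⟨N, hN⟩ := exists_hasWalk_self_of_dvd hE u
  have hex : ∃ d, HasWalk E (d * s) u j := by
    have hle : m + N ≤ (m + N) * s := Nat.le_mul_of_pos_right _ hs
    have hloop := hN ((m + N) * s - m) (by omega)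
      (Nat.dvd_sub (dvd_mul_of_dvd_right hsγ _) hmγ)
    have hwalk := hloop.append huj
    rw [Nat.sub_add_cancel (by omega)] at hwalk
    exact ⟨m + N, hwalk⟩
  have hγ : 0 < cyclicity E := Nat.pos_of_dvd_of_pos hsγ hs
  have hclass := lt_card_cyclicClass_of_minimal hsγ (Nat.find_spec hex)
    fun d' hd' => Nat.find_min hex hd'
  have hcard := card_cyclicClass_add_le hE hγ fun q =>
    (hu.exists_walk_to_loop hs q).imp fun _ h => h.1
  have hwalk := (hu.loop_mul (Fintype.card V - cyclicity E - Nat.find hex)).append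
    (Nat.find_spec hex)
  rwa [← Nat.add_mul, Nat.sub_add_cancel (by omega)] at hwalk

end Cyclicity

theorem mul_sub_add_sub_le_sub_one_sq_add_one {s n γ : ℕ} (hsn : s < n) (hγ : 0 < γ) :
    s * (n - γ) + (n - s) ≤ (n - 1) ^ 2 + 1 := by
  obtain ⟨r, rfl⟩ : ∃ r, n = s + r + 1 := ⟨n - s - 1, by omega⟩
  have hγ' : s * (s + r + 1 - γ) ≤ s * (s + r) := Nat.mul_le_mul_left s (by omega)
  have hr : r ≤ s * r + r ^ 2 := by nlinarith
  rw [show s + r + 1 - 1 = s + r by omega, show s + r + 1 - s = r + 1 by omega]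
  nlinarith

section Wielandt

variable {V : Type*} [Fintype V] {E : V → V → Prop}

theorem hasWalk_of_modEq (hE : ∀ a b, ∃ k, HasWalk E k a b) {l t : ℕ} {i j : V}
    (hl : HasWalk E l i j) (hlt : l ≡ t [MOD cyclicity E])
    (ht : (Fintype.card V - 1) ^ 2 + 1 ≤ t) : HasWalk E t i j := by
  set γ := cyclicity E
  rcases Nat.eq_zero_or_pos γ with hγ | hγ
  · rw [hγ, Nat.modEq_zero_iff] at hlt
    rwa [← hlt]
  have hcyc : ∃ k, 0 < k ∧ ∃ x, HasWalk E k x x := by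
    obtain ⟨k, ⟨x, hx⟩, hk⟩ := Nat.exists_ne_zero_of_setGcd_ne_zero hγ.ne'
    exact ⟨k, Nat.pos_of_ne_zero hk, x, hx⟩
  set s := Nat.find hcyc
  have hs : IsLeast {k | 0 < k ∧ ∃ x, HasWalk E k x x} s :=
    ⟨Nat.find_spec hcyc, fun k hk => Nat.find_min' hcyc hk⟩
  obtain ⟨hs0, v, hv⟩ := hs.1
  have hsγ : γ ∣ s := cyclicity_dvd hv
  have hsn : s ≤ Fintype.card V := (le_card_loops hs).trans (Finset.card_le_univ _)
  have hbound : s * (Fintype.card V - γ) + (Fintype.card V - s) ≤ t := by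
    rcases hsn.lt_or_eq with hlt | heq
    · exact (mul_sub_add_sub_le_sub_one_sq_add_one hlt hγ).trans ht
    · have hγn : γ = Fintype.card V := cyclicity_eq_card_of_isLeast (heq ▸ hs)
      rw [heq, hγn]
      simp
  obtain ⟨u, hiu, hu⟩ := exists_hasWalk_to_loop hE hs i
    (ℓ := t - s * (Fintype.card V - γ)) (by omega)
  obtain ⟨m, hm⟩ := hE u j
  have hmγ : γ ∣ m := by
    have hmod : t - s * (Fintype.card V - γ) + m ≡
        t - s * (Fintype.card V - γ) + s * (Fintype.card V - γ) [MOD γ] := by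
      rw [Nat.sub_add_cancel (by omega)]
      exact ((hiu.append hm).modEq_cyclicity hE hl).trans hlt
    exact Nat.modEq_zero_iff_dvd.1 <| (Nat.ModEq.add_left_cancel' _ hmod).trans
      (Nat.modEq_zero_iff_dvd.2 (dvd_mul_of_dvd_left hsγ _))
  have hwalk := hiu.append (hasWalk_card_sub_cyclicity_mul hE hu hs0 hsγ hm hmγ)
  rwa [Nat.mul_comm _ s, Nat.sub_add_cancel (by omega)] at hwalk

end Wielandt

section Bridge

variable {n : ℕ} {E : Fin n → Fin n → Prop} {k : ℕ} {i j : Fin n}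

theorem hasWalk_iff_isEPath : HasWalk E k i j ↔
    ∃ p : Fin (k + 1) → Fin n, IsEPath E k p ∧ p 0 = i ∧ p (Fin.last k) = j := by
  constructor
  · intro h
    obtain ⟨p, hp, hp0, hpk⟩ := h.exists_isWalkSeq
    refine ⟨fun m => p m, fun m => ?_, hp0, hpk⟩
    simpa using hp m m.isLt
  · rintro ⟨p, hp, rfl, rfl⟩
    have hseq : IsWalkSeq E k fun m => p (Fin.clamp m k) := fun m hm => by
      have := hp ⟨m, hm⟩
      convert this using 2 <;> ext <;> simp [Fin.clamp] <;> omega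
    simpa [Fin.clamp, Fin.last] using hseq.hasWalk (Nat.zero_le k) le_rfl

theorem setGcd_eq_natSetGcd (S : Set ℕ) : setGcd S = Nat.setGcd S := by
  have hgcd : {d | (∀ s ∈ S, d ∣ s) ∧ ∀ e : ℕ, (∀ s ∈ S, e ∣ s) → e ∣ d} = {Nat.setGcd S} := by
    ext d
    constructor
    · rintro ⟨hdvd, hgreatest⟩
      exact Nat.dvd_antisymm (Nat.dvd_setGcd_iff.2 hdvd)
        (hgreatest _ fun s hs => Nat.setGcd_dvd_of_mem hs)
    · rintro rfl
      exact ⟨fun s hs => Nat.setGcd_dvd_of_mem hs, fun e he => Nat.dvd_setGcd_iff.2 he⟩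
  rw [setGcd, hgcd, csInf_singleton]

theorem mem_allCycLen : k ∈ allCycLen E ↔ 0 < k ∧ ∃ x, HasWalk E k x x := by
  simp only [allCycLen, cycLen, hasWalk_iff_isEPath, Set.mem_ofPred_eq]
  aesop

theorem setGcd_allCycLen : setGcd (allCycLen E) = cyclicity E := by
  rw [setGcd_eq_natSetGcd]
  refine Nat.dvd_antisymm (dvd_cyclicity fun k x hx => ?_)
    (Nat.dvd_setGcd_iff.2 fun k hk => ?_)
  · rcases Nat.eq_zero_or_pos k with rfl | hk
    · exact dvd_zero _
    · exact Nat.setGcd_dvd_of_mem (mem_allCycLen.2 ⟨hk, x, hx⟩)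
  · obtain ⟨-, x, hx⟩ := mem_allCycLen.1 hk
    exact cyclicity_dvd hx

theorem sameClass_iff {γ : ℕ} : SameClass E γ i j ↔ ∃ k, HasWalk E k i j ∧ γ ∣ k := by
  simp only [SameClass, hasWalk_iff_isEPath]
  aesop

theorem classAccess_iff (hE : ∀ a b, ∃ k, HasWalk E k a b) {t : ℕ} :
    ClassAccess E (cyclicity E) t i j ↔ ∃ l, HasWalk E l i j ∧ l ≡ t [MOD cyclicity E] := by
  constructor
  · rintro ⟨i', j', hii', hjj', k, p, hp, hp0, hpk, hkt⟩
    obtain ⟨k₁, hi, hk₁⟩ := sameClass_iff.1 hii'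
    obtain ⟨k₂, hj, hk₂⟩ := sameClass_iff.1 hjj'
    obtain ⟨c, hc⟩ := hE j' j
    have hcγ : cyclicity E ∣ c := (Nat.dvd_add_right hk₂).1 (cyclicity_dvd (hj.append hc))
    refine ⟨k₁ + k + c, (hi.append (hasWalk_iff_isEPath.2 ⟨p, hp, hp0, hpk⟩)).append hc, ?_⟩
    calc k₁ + k + c ≡ 0 + k + 0 [MOD cyclicity E] :=
          ((Nat.modEq_zero_iff_dvd.2 hk₁).add_right k).add (Nat.modEq_zero_iff_dvd.2 hcγ)
      _ = k := by simp
      _ ≡ t [MOD cyclicity E] := hkt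
  · rintro ⟨l, hl, hlt⟩
    obtain ⟨p, hp⟩ := hasWalk_iff_isEPath.1 hl
    exact ⟨i, j, sameClass_iff.2 ⟨0, .nil i, dvd_zero _⟩, sameClass_iff.2 ⟨0, .nil j, dvd_zero _⟩,
      l, p, hp.1, hp.2.1, hp.2.2, hlt⟩

theorem mpow_eq_ite {S : Fin n → Fin n → ℝ≥0} (hS : ∀ i j, S i j = if E i j then 1 else 0)
    (t : ℕ) (i j : Fin n) : mpow S t i j = if HasWalk E t i j then 1 else 0 := by
  induction t generalizing i j with
  | zero => simp [mpow, hasWalk_zero_iff]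
  | succ t ih =>
    simp only [mpow, mmul, hS, ih, ite_zero_mul_ite_zero, mul_one, hasWalk_succ_iff]
    split_ifs with h
    · obtain ⟨m, hm⟩ := h
      refine le_antisymm (Finset.sup_le fun k _ => by split_ifs <;> simp) ?_
      exact Finset.le_sup_of_le (Finset.mem_univ m) (by rw [if_pos hm])
    · exact le_antisymm (Finset.sup_le fun k _ => by rw [if_neg fun hk => h ⟨k, hk⟩]) zero_le

end Bridge

/-- for the Boolean incidence matrix `S` of a strongly connected
digraph on `n` nodes with cyclicity `γ`, and any `t ≥ (n-1)² + 1`, the entry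
`(S^t)_{ij}` is `1` if `[i] →_t [j]` and `0` otherwise. -/
theorem boolean_power_ultimate {n : ℕ} (E : Fin n → Fin n → Prop)
    (hsc : ∀ i j : Fin n, Reach E i j)
    (S : Fin n → Fin n → ℝ≥0) (hS : ∀ i j, S i j = if E i j then 1 else 0)
    (t : ℕ) (ht : (n-1)^2 + 1 ≤ t) (i j : Fin n) :
    (ClassAccess E (setGcd (allCycLen E)) t i j → mpow S t i j = 1) ∧
    (¬ ClassAccess E (setGcd (allCycLen E)) t i j → mpow S t i j = 0) := by
  have hE : ∀ a b, ∃ k, HasWalk E k a b := fun a b => by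
    obtain ⟨k, hk⟩ := hsc a b
    exact ⟨k, hasWalk_iff_isEPath.2 hk⟩
  have hwalk : ClassAccess E (cyclicity E) t i j ↔ HasWalk E t i j := by
    refine (classAccess_iff hE).trans ⟨fun ⟨l, hl, hlt⟩ => ?_, fun h => ⟨t, h, rfl⟩⟩
    exact hasWalk_of_modEq hE hl hlt (by simpa using ht)
  rw [setGcd_allCycLen, hwalk, mpow_eq_ite hS]
  exact ⟨fun h => if_pos h, fun h => if_neg h⟩

end MaxAlg
end
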